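/- Let a₁ ≤ a₂ ≤ … ≤ aₙ be positive integers with aₙ < Σ_{i<n} aᵢ. Then the unweighted complete n-partite graph K(a₁,…,aₙ) is exact if and only if there exists a subset S ⊆ {1,…,n} with Σ_{i∈S} aᵢ = Σ_{i∉S} aᵢ. -/

import Mathlib

open Matrix Finset

/-- The Laplacian matrix of a weighted graph given by a weight function `w`. -/
noncomputable def lapW {V : Type*} [Fintype V] [DecidableEq V] (w : V → V → ℝ) :
    Matrix V V ℝ :=
  Matrix.of fun i j => if i = j then ∑ k, w i k else -w i j

/-- `w` is a valid weight function: symmetric, zero diagonal, nonnegative. -/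
def IsWeight {V : Type*} [Fintype V] (w : V → V → ℝ) : Prop :=
  (∀ i j, w i j = w j i) ∧ (∀ i, w i i = 0) ∧ ∀ i j, 0 ≤ w i j

/-- The maximum-cut value `MC(G)`. -/
noncomputable def maxCutVal {V : Type*} [Fintype V] [DecidableEq V] (w : V → V → ℝ) : ℝ :=
  sSup {c | ∃ x : V → ℝ, (∀ i, x i = 1 ∨ x i = -1) ∧
    c = (1 / 4) * (x ⬝ᵥ (lapW w).mulVec x)}

/-- The Max-Cut SDP value `φ(G)`. -/
noncomputable def sdpVal {V : Type*} [Fintype V] [DecidableEq V] (w : V → V → ℝ) : ℝ :=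
  sSup {c | ∃ X : Matrix V V ℝ, X.PosSemidef ∧ (∀ i, X i i = 1) ∧
    c = (1 / 4) * (lapW w * X).trace}

/-- `X` is an optimal solution of the Max-Cut SDP for the weighted graph `w`. -/
def IsOptSol {V : Type*} [Fintype V] [DecidableEq V] (w : V → V → ℝ)
    (X : Matrix V V ℝ) : Prop :=
  X.PosSemidef ∧ (∀ i, X i i = 1) ∧ (1 / 4) * (lapW w * X).trace = sdpVal w

/-- The Max-Cut SDP relaxation is exact: `φ(G) = MC(G)`. -/
def IsExact {V : Type*} [Fintype V] [DecidableEq V] (w : V → V → ℝ) : Prop :=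
  sdpVal w = maxCutVal w

/-- The unweighted complete `n`-partite graph `K(a 0, …, a (n-1))`: vertices are pairs
`⟨i, v⟩` with `v` in a part of size `a i`, adjacent iff they lie in different parts. -/
noncomputable def multiW {n : ℕ} (a : Fin n → ℕ) :
    (Σ i : Fin n, Fin (a i)) → (Σ i : Fin n, Fin (a i)) → ℝ :=
  fun u v => if u.1 = v.1 then 0 else 1

/-!
Put `N = ∑ aᵢ`. For a unit-diagonal PSD matrix `X` and weights in `[0, 1]`,
`tr (L X) = ∑_{u,v} w(u,v) (1 - X_{vu}) ≤ ∑_{u,v} (1 - X_{vu}) ≤ N²`, since the entries of `X`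
are at most `1` and its total sum is nonnegative. When the largest part is smaller than the others
together, a greedy split of the other parts into two groups produces a triangle with the two group
sums and the largest part as side lengths; this gives unit vectors `zᵢ ∈ ℂ` with `∑ aᵢ zᵢ = 0`, and
their Gram matrix attains `N²`, so `φ = N²/4`. A `±1` cut `x` with part sums `sᵢ` has value
`N² - (∑ x)² - ∑ᵢ (aᵢ² - sᵢ²)`, which is `N²` exactly when every `sᵢ = ±aᵢ` and the signed sizes
cancel, i.e. when the parts split into two halves of equal total size.
-/

theorem vecMulVec_self_apply_self_of_sign {V : Type*} {x : V → ℝ}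
    (hx : ∀ i, x i = 1 ∨ x i = -1) (i : V) : vecMulVec x x i i = 1 := by
  rcases hx i with h | h <;> simp [vecMulVec_apply, h]

theorem sq_sum_le_card_sq_of_sign {ι : Type*} [Fintype ι] {x : ι → ℝ}
    (hx : ∀ i, x i = 1 ∨ x i = -1) : (∑ i, x i) ^ 2 ≤ (Fintype.card ι : ℝ) ^ 2 := by
  have habs : |∑ i, x i| ≤ Fintype.card ι := by
    calc |∑ i, x i| ≤ ∑ i, |x i| := abs_sum_le_sum_abs _ _
      _ = Fintype.card ι := by simp [fun i => show |x i| = 1 by rcases hx i with h | h <;> simp [h]]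
  exact sq_le_sq' (abs_le.1 habs).1 (abs_le.1 habs).2

theorem sum_sum_one_sub_mul {ι : Type*} [Fintype ι] (x : ι → ℝ) :
    ∑ u, ∑ v, (1 - x v * x u) = (Fintype.card ι : ℝ) ^ 2 - (∑ u, x u) ^ 2 := by
  simp [sum_sub_distrib, sq, sum_mul_sum, mul_comm]

theorem sum_ite_mem_neg {ι : Type*} [Fintype ι] [DecidableEq ι] (S : Finset ι) (f : ι → ℝ) :
    ∑ i, (if i ∈ S then f i else -f i) = ∑ i ∈ S, f i - ∑ i ∈ Sᶜ, f i := by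
  rw [← sum_add_sum_compl S, sub_eq_add_neg, ← sum_neg_distrib]
  congr 1 <;> refine sum_congr rfl fun i hi => ?_
  · rw [if_pos hi]
  · rw [if_neg (mem_compl.1 hi)]

section Laplacian

variable {V : Type*} [Fintype V]

theorem Matrix.PosSemidef.apply_le_one [DecidableEq V] {X : Matrix V V ℝ} (hX : X.PosSemidef)
    (h1 : ∀ i, X i i = 1) (u v : V) : X u v ≤ 1 := by
  have h := hX.dotProduct_mulVec_nonneg (Pi.single u 1 - Pi.single v 1)
  have hsymm : X v u = X u v := by simpa using congrFun₂ hX.isHermitian u v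
  simp [Matrix.mulVec_sub, sub_dotProduct, dotProduct_sub, h1, hsymm] at h
  linarith

theorem Matrix.PosSemidef.sum_sum_nonneg {X : Matrix V V ℝ} (hX : X.PosSemidef) :
    0 ≤ ∑ u, ∑ v, X u v := by
  simpa [dotProduct, Matrix.mulVec, mul_sum] using hX.dotProduct_mulVec_nonneg (fun _ => 1)

variable [DecidableEq V]

theorem trace_lapW_mul {w : V → V → ℝ} (hw : ∀ i, w i i = 0) {X : Matrix V V ℝ}
    (hX : ∀ i, X i i = 1) :
    (lapW w * X).trace = ∑ u, ∑ v, w u v * (1 - X v u) := by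
  have hL : ∀ u v, lapW w u v = (if u = v then ∑ k, w u k else 0) - w u v := by
    intro u v
    rcases eq_or_ne u v with rfl | h
    · simp [lapW, hw]
    · simp [lapW, h]
  simp only [Matrix.trace, Matrix.diag_apply, Matrix.mul_apply, hL, sub_mul, ite_mul, zero_mul,
    sum_sub_distrib, sum_ite_eq, mem_univ, if_true, hX, mul_sub, mul_one]

theorem trace_lapW_mul_le_card_sq {w : V → V → ℝ} (hw0 : ∀ i, w i i = 0)
    (hw1 : ∀ i j, w i j ≤ 1) {X : Matrix V V ℝ} (hX : X.PosSemidef) (h1 : ∀ i, X i i = 1) :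
    (lapW w * X).trace ≤ (Fintype.card V : ℝ) ^ 2 := by
  rw [trace_lapW_mul hw0 h1]
  calc ∑ u, ∑ v, w u v * (1 - X v u) ≤ ∑ u, ∑ v, (1 - X v u) := by
        gcongr with u _ v _
        exact mul_le_of_le_one_left (sub_nonneg.2 (hX.apply_le_one h1 v u)) (hw1 u v)
    _ = (Fintype.card V : ℝ) ^ 2 - ∑ v, ∑ u, X v u := by
        simp [sum_sub_distrib, sum_comm (γ := V) (f := fun u v => X v u), sq]
    _ ≤ (Fintype.card V : ℝ) ^ 2 := sub_le_self _ hX.sum_sum_nonneg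

theorem dotProduct_lapW_mulVec (w : V → V → ℝ) (x : V → ℝ) :
    x ⬝ᵥ lapW w *ᵥ x = (lapW w * vecMulVec x x).trace := by
  rw [mul_vecMulVec, trace_vecMulVec, dotProduct_comm]

theorem dotProduct_lapW_mulVec_le_card_sq {w : V → V → ℝ} (hw0 : ∀ i, w i i = 0)
    (hw1 : ∀ i j, w i j ≤ 1) {x : V → ℝ} (hx : ∀ i, x i = 1 ∨ x i = -1) :
    x ⬝ᵥ lapW w *ᵥ x ≤ (Fintype.card V : ℝ) ^ 2 := by
  rw [dotProduct_lapW_mulVec]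
  exact trace_lapW_mul_le_card_sq hw0 hw1 (posSemidef_vecMulVec_self_star x)
    (vecMulVec_self_apply_self_of_sign hx)

theorem exists_eq_maxCutVal (w : V → V → ℝ) :
    ∃ x : V → ℝ, (∀ i, x i = 1 ∨ x i = -1) ∧ maxCutVal w = 1 / 4 * (x ⬝ᵥ lapW w *ᵥ x) := by
  set f := fun x : V → ℝ => 1 / 4 * (x ⬝ᵥ lapW w *ᵥ x)
  have hcuts : {c | ∃ x : V → ℝ, (∀ i, x i = 1 ∨ x i = -1) ∧
      c = (1 / 4) * (x ⬝ᵥ (lapW w).mulVec x)} = f '' Set.univ.pi fun _ => {1, -1} := by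
    ext c
    simp [f, eq_comm]
  have hne : (Set.univ.pi fun _ : V => ({1, -1} : Set ℝ)).Nonempty := ⟨fun _ => 1, by simp⟩
  have hmem := (hne.image f).csSup_mem ((Set.Finite.pi fun _ => by simp).image f)
  rw [← hcuts] at hmem
  exact hmem

end Laplacian

section Multipartite

variable {n : ℕ} {a : Fin n → ℕ}

theorem multiW_self (u : Σ i, Fin (a i)) : multiW a u u = 0 := by
  simp [multiW]

theorem multiW_le_one (u v : Σ i, Fin (a i)) : multiW a u v ≤ 1 := by
  unfold multiW; split <;> norm_num

theorem sum_multiW_mul (g : (Σ i, Fin (a i)) → (Σ i, Fin (a i)) → ℝ) :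
    ∑ u, ∑ v, multiW a u v * g u v =
      ∑ u, ∑ v, g u v - ∑ i, ∑ j, ∑ j', g ⟨i, j⟩ ⟨i, j'⟩ := by
  have h : ∀ u v, multiW a u v * g u v = g u v - if u.1 = v.1 then g u v else 0 := by
    intro u v
    by_cases h : u.1 = v.1 <;> simp [multiW, h]
  simp only [h, sum_sub_distrib]
  congr 1
  simp only [Fintype.sum_sigma]
  refine sum_congr rfl fun i _ => sum_congr rfl fun j _ => ?_
  rw [sum_eq_single i (fun i' _ hi' => by simp [Ne.symm hi']) (by simp)]
  simp

theorem dotProduct_lapW_multiW_mulVec {x : (Σ i, Fin (a i)) → ℝ}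
    (hx : ∀ u, x u = 1 ∨ x u = -1) :
    x ⬝ᵥ lapW (multiW a) *ᵥ x = (∑ i, (a i : ℝ)) ^ 2 - (∑ u, x u) ^ 2 -
      ∑ i, ((a i : ℝ) ^ 2 - (∑ j, x ⟨i, j⟩) ^ 2) := by
  rw [dotProduct_lapW_mulVec, trace_lapW_mul multiW_self (vecMulVec_self_apply_self_of_sign hx),
    sum_multiW_mul]
  simp only [vecMulVec_apply, sum_sum_one_sub_mul, Fintype.card_sigma, Fintype.card_fin]
  push_cast
  rfl

theorem exists_balanced_of_dotProduct_lapW_multiW_mulVec_eq {x : (Σ i, Fin (a i)) → ℝ}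
    (hx : ∀ u, x u = 1 ∨ x u = -1)
    (h : x ⬝ᵥ lapW (multiW a) *ᵥ x = (∑ i, (a i : ℝ)) ^ 2) :
    ∃ S : Finset (Fin n), ∑ i ∈ S, a i = ∑ i ∈ Sᶜ, a i := by
  set s : Fin n → ℝ := fun i => ∑ j, x ⟨i, j⟩
  have hs : ∀ i, 0 ≤ (a i : ℝ) ^ 2 - s i ^ 2 := fun i => by
    simpa using sq_sum_le_card_sq_of_sign fun j => hx ⟨i, j⟩
  rw [dotProduct_lapW_multiW_mulVec hx] at h
  have hsum : ∑ i, ((a i : ℝ) ^ 2 - s i ^ 2) = 0 := by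
    nlinarith [sum_nonneg fun i (_ : i ∈ univ) => hs i, sq_nonneg (∑ u, x u)]
  set S := univ.filter fun i => s i = a i
  have hsq : ∀ i, s i = if i ∈ S then (a i : ℝ) else -a i := fun i => by
    have := (sum_eq_zero_iff_of_nonneg fun i _ => hs i).1 hsum i (mem_univ i)
    rcases sq_eq_sq_iff_eq_or_eq_neg.1 (sub_eq_zero.1 this).symm with h | h <;> simp [S, h]
  refine ⟨S, ?_⟩
  have hx0 : ∑ u, x u = 0 := by nlinarith [sum_nonneg fun i (_ : i ∈ univ) => hs i]
  rw [Fintype.sum_sigma, sum_congr rfl fun i _ => hsq i, sum_ite_mem_neg, sub_eq_zero] at hx0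
  exact_mod_cast hx0

theorem exists_dotProduct_lapW_multiW_mulVec_eq_of_balanced {S : Finset (Fin n)}
    (hS : ∑ i ∈ S, a i = ∑ i ∈ Sᶜ, a i) :
    ∃ x : (Σ i, Fin (a i)) → ℝ, (∀ u, x u = 1 ∨ x u = -1) ∧
      x ⬝ᵥ lapW (multiW a) *ᵥ x = (∑ i, (a i : ℝ)) ^ 2 := by
  set x : (Σ i, Fin (a i)) → ℝ := fun u => if u.1 ∈ S then 1 else -1
  have hx : ∀ u, x u = 1 ∨ x u = -1 := fun u => by by_cases h : u.1 ∈ S <;> simp [x, h]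
  have hs : ∀ i, ∑ j, x ⟨i, j⟩ = if i ∈ S then (a i : ℝ) else -a i := fun i => by
    by_cases h : i ∈ S <;> simp [x, h]
  have hx0 : ∑ u, x u = 0 := by
    rw [Fintype.sum_sigma, sum_congr rfl fun i _ => hs i, sum_ite_mem_neg, sub_eq_zero]
    exact_mod_cast hS
  refine ⟨x, hx, ?_⟩
  rw [dotProduct_lapW_multiW_mulVec hx, hx0]
  simp [hs, apply_ite (· ^ 2)]

theorem trace_lapW_multiW_mul_gram {E : Type*} [NormedAddCommGroup E] [InnerProductSpace ℝ E]
    {z : Fin n → E} (hz : ∀ i, ‖z i‖ = 1) (h0 : ∑ i, (a i : ℝ) • z i = 0) :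
    (lapW (multiW a) * gram ℝ fun u : Σ i, Fin (a i) => z u.1).trace = (∑ i, (a i : ℝ)) ^ 2 := by
  have hdiag : ∀ u : Σ i, Fin (a i), gram ℝ (fun u => z u.1) u u = 1 := fun u => by
    simp [hz]
  have hsum : ∑ u : Σ i, Fin (a i), z u.1 = 0 := by
    simpa [Fintype.sum_sigma, ← Nat.cast_smul_eq_nsmul ℝ] using h0
  rw [trace_lapW_mul multiW_self hdiag, sum_multiW_mul]
  simp [hz, sum_sub_distrib, ← sum_inner, hsum, sq]

theorem sdpVal_multiW {E : Type*} [NormedAddCommGroup E] [InnerProductSpace ℝ E]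
    {z : Fin n → E} (hz : ∀ i, ‖z i‖ = 1) (h0 : ∑ i, (a i : ℝ) • z i = 0) :
    sdpVal (multiW a) = (∑ i, (a i : ℝ)) ^ 2 / 4 := by
  refine IsGreatest.csSup_eq ⟨⟨_, posSemidef_gram ℝ fun u : Σ i, Fin (a i) => z u.1,
    fun u => by simp [hz], ?_⟩, ?_⟩
  · rw [trace_lapW_multiW_mul_gram hz h0]; ring
  · rintro c ⟨X, hX, h1, rfl⟩
    have := trace_lapW_mul_le_card_sq multiW_self multiW_le_one hX h1
    push_cast [Fintype.card_sigma, Fintype.card_fin] at this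
    linarith

theorem maxCutVal_multiW_of_balanced {S : Finset (Fin n)} (hS : ∑ i ∈ S, a i = ∑ i ∈ Sᶜ, a i) :
    maxCutVal (multiW a) = (∑ i, (a i : ℝ)) ^ 2 / 4 := by
  obtain ⟨x, hx, hval⟩ := exists_dotProduct_lapW_multiW_mulVec_eq_of_balanced hS
  refine IsGreatest.csSup_eq ⟨⟨x, hx, by rw [hval]; ring⟩, ?_⟩
  rintro c ⟨y, hy, rfl⟩
  have := dotProduct_lapW_mulVec_le_card_sq multiW_self multiW_le_one hy
  push_cast [Fintype.card_sigma, Fintype.card_fin] at this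
  linarith

end Multipartite

theorem Finset.exists_subset_abs_two_mul_sum_sub_sum_le {ι : Type*} (s : Finset ι) {f : ι → ℝ}
    {c : ℝ} (hc : 0 ≤ c) (hf : ∀ i ∈ s, 0 ≤ f i ∧ f i ≤ c) :
    ∃ t ⊆ s, |2 * ∑ i ∈ t, f i - ∑ i ∈ s, f i| ≤ c := by
  classical
  induction s using Finset.cons_induction with
  | empty => exact ⟨∅, by simp [hc]⟩
  | cons x s hx ih =>
    obtain ⟨t, hts, ht⟩ := ih fun i hi => hf i (mem_cons_of_mem hi)
    obtain ⟨hfx0, hfxc⟩ := hf x (mem_cons_self x s)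
    rw [abs_le] at ht
    by_cases hle : 2 * ∑ i ∈ t, f i ≤ ∑ i ∈ s, f i
    · refine ⟨cons x t fun hxt => hx (hts hxt), cons_subset_cons.2 hts, ?_⟩
      rw [sum_cons, sum_cons, abs_le]
      constructor <;> linarith
    · refine ⟨t, hts.trans (subset_cons _), ?_⟩
      rw [sum_cons, abs_le]
      constructor <;> linarith

theorem Complex.exists_norm_eq_one_mul_add_mul_eq {p q c : ℝ} (hc : 0 < c) (hpq : c < p + q)
    (hp : p ≤ q + c) (hq : q ≤ p + c) :
    ∃ u v : ℂ, ‖u‖ = 1 ∧ ‖v‖ = 1 ∧ p * u + q * v = c := by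
  have hp0 : 0 < p := by linarith
  have hq0 : 0 < q := by linarith
  -- `γ` is the cosine of the angle between the sides `c` and `p` of the triangle
  set γ := (c ^ 2 + p ^ 2 - q ^ 2) / (2 * c * p) with hγ_def
  have hγ : γ ^ 2 ≤ 1 := by
    rw [div_pow, div_le_one (by positivity)]
    nlinarith [mul_nonneg (mul_nonneg (mul_nonneg (sub_nonneg.2 hp) (sub_nonneg.2 hq))
      (sub_nonneg.2 hpq.le)) (by linarith : 0 ≤ p + q + c)]
  have hσ := Real.sq_sqrt (sub_nonneg.2 hγ)
  set u : ℂ := ⟨γ, √(1 - γ ^ 2)⟩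
  have hu : ‖u‖ ^ 2 = 1 := by
    rw [Complex.sq_norm, Complex.normSq_apply]
    simp only [u]
    linarith
  have hpu : ‖(c : ℂ) - p * u‖ ^ 2 = q ^ 2 := by
    rw [Complex.sq_norm, Complex.normSq_apply]
    simp only [u, Complex.sub_re, Complex.sub_im, Complex.mul_re, Complex.mul_im,
      Complex.ofReal_re, Complex.ofReal_im]
    have : 2 * c * p * γ = c ^ 2 + p ^ 2 - q ^ 2 := by
      rw [hγ_def]; field_simp
    nlinarith
  have hq' : (q : ℂ) ≠ 0 := by exact_mod_cast hq0.ne'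
  refine ⟨u, (c - p * u) / q, ?_, ?_, by field_simp; ring⟩
  · exact (pow_eq_one_iff_of_nonneg (norm_nonneg u) two_ne_zero).1 hu
  · rw [norm_div, Complex.norm_real, Real.norm_of_nonneg hq0.le, div_eq_one_iff_eq hq0.ne']
    exact (sq_eq_sq₀ (norm_nonneg _) hq0.le).1 hpu

theorem exists_norm_eq_one_sum_smul_eq_zero {ι : Type*} [Fintype ι] [DecidableEq ι] {a : ι → ℝ}
    (ha : ∀ i, 0 ≤ a i) {k : ι} (hmax : ∀ i, a i ≤ a k) (hk : 2 * a k < ∑ i, a i) :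
    ∃ z : ι → ℂ, (∀ i, ‖z i‖ = 1) ∧ ∑ i, a i • z i = 0 := by
  set s := univ.erase k
  have hs : ∑ i ∈ s, a i = ∑ i, a i - a k := sum_erase_eq_sub (mem_univ k)
  have hc : 0 < a k := by
    have hle : ∑ i, a i ≤ Fintype.card ι * a k := by
      simpa using sum_le_sum fun i (_ : i ∈ univ) => hmax i
    by_contra! h
    rw [le_antisymm h (ha k)] at hle hk
    linarith
  obtain ⟨t, hts, ht⟩ := s.exists_subset_abs_two_mul_sum_sub_sum_le (ha k) fun i _ => ⟨ha i, hmax i⟩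
  rw [abs_le] at ht
  obtain ⟨u, v, hu, hv, huv⟩ := Complex.exists_norm_eq_one_mul_add_mul_eq
    (p := ∑ i ∈ t, a i) (q := ∑ i ∈ s, a i - ∑ i ∈ t, a i) hc (by linarith) (by linarith)
    (by linarith)
  set z : ι → ℂ := fun i => if i = k then -1 else if i ∈ t then u else v
  have hzt : ∀ i ∈ t, z i = u := fun i hi => by simp [z, ne_of_mem_erase (hts hi), hi]
  have hzs : ∀ i ∈ s \ t, z i = v := fun i hi => by
    simp [z, ne_of_mem_erase (sdiff_subset hi), (mem_sdiff.1 hi).2]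
  refine ⟨z, fun i => by simp only [z]; split_ifs <;> simp [hu, hv], ?_⟩
  have hsum_t : ∑ i ∈ t, a i • z i = (∑ i ∈ t, a i) • u := by
    rw [sum_smul]; exact sum_congr rfl fun i hi => by rw [hzt i hi]
  have hsum_st : ∑ i ∈ s \ t, a i • z i = (∑ i ∈ s \ t, a i) • v := by
    rw [sum_smul]; exact sum_congr rfl fun i hi => by rw [hzs i hi]
  rw [← add_sum_erase univ _ (mem_univ k), ← sum_sdiff hts, hsum_t, hsum_st, sum_sdiff_eq_sub hts]
  simp only [z, if_pos rfl, Complex.real_smul]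
  linear_combination huv

theorem multiW_isExact_iff_exists_balanced_general {n : ℕ} (a : Fin (n + 1) → ℕ)
    (hmono : Monotone a)
    (hnd : a (Fin.last n) < ∑ i : Fin n, a i.castSucc) :
    IsExact (multiW a) ↔
      ∃ S : Finset (Fin (n + 1)), ∑ i ∈ S, a i = ∑ i ∈ Sᶜ, a i := by
  have hlast : 2 * a (Fin.last n) < ∑ i, a i := by
    rw [Fin.sum_univ_castSucc]; omega
  obtain ⟨z, hz, hz0⟩ := exists_norm_eq_one_sum_smul_eq_zero (a := fun i => (a i : ℝ))
    (fun i => Nat.cast_nonneg _) (fun i => by exact_mod_cast hmono (Fin.le_last i))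
    (by exact_mod_cast hlast)
  have hsdp := sdpVal_multiW hz hz0
  constructor
  · intro hexact
    obtain ⟨x, hx, hmax⟩ := exists_eq_maxCutVal (multiW a)
    refine exists_balanced_of_dotProduct_lapW_multiW_mulVec_eq hx ?_
    rw [IsExact, hsdp, hmax] at hexact
    linarith
  · rintro ⟨S, hS⟩
    rw [IsExact, hsdp, maxCutVal_multiW_of_balanced hS]

/-- **NP-hardness gadget: exactness of complete multipartite graphs.**
Let `a 0 ≤ a 1 ≤ … ≤ a n` be positive integers with the largest, `a (Fin.last n)`, smaller
than the sum of the others. Then `K(a 0, …, a n)` is exact iff there is a subset `S` of the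
indices with `∑_{i ∈ S} a i = ∑_{i ∉ S} a i`. -/
theorem multiW_isExact_iff_exists_balanced {n : ℕ} (a : Fin (n + 1) → ℕ)
    (hpos : ∀ i, 0 < a i) (hmono : Monotone a)
    (hnd : a (Fin.last n) < ∑ i : Fin n, a i.castSucc) :
    IsExact (multiW a) ↔
      ∃ S : Finset (Fin (n + 1)), ∑ i ∈ S, a i = ∑ i ∈ Sᶜ, a i :=
  multiW_isExact_iff_exists_balanced_general a hmono hnd
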